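/- arXiv:0910.4952 — 2 statements merged into one kernel-verified Lean document; each statement's English description precedes it below -/
import Mathlib

section
/- For all integers n ≥ 2, all real ε' ≥ 0 with ε' ≤ 1/n, and all i with 1 ≤ i ≤ n, the product (1/i − ε') · ∏_{j=i}^{n-1} (j/(j+1) − ε') is at least 1/n − n·ε', provided each factor is nonnegative. -/
/-!
The honest probabilities telescope: `(1/i) * ∏_{j=i}^{n-1} j/(j+1) = 1/n`. For factors in `[0, 1]`,
lowering each factor lowers the product by at most the sum of the decrements, and there are
`n - i + 1 ≤ n` factors, each lowered by `ε'`.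
-/

open Finset

section ProdSubProd

variable {R : Type*} [CommRing R] [PartialOrder R] [IsOrderedRing R]

theorem mul_sub_mul_le_sub_add_sub {x y p q : R} (hyx : y ≤ x) (hx : x ≤ 1) (hqp : q ≤ p)
    (hp : p ≤ 1) : x * p - y * q ≤ (x - y) + (p - q) := by
  have hxy : (x - y) * p ≤ x - y := mul_le_of_le_one_right (sub_nonneg.2 hyx) hp
  have hpq : y * (p - q) ≤ p - q := mul_le_of_le_one_left (sub_nonneg.2 hqp) (hyx.trans hx)
  linear_combination hxy + hpq

theorem Finset.prod_sub_prod_le_sum_sub {ι : Type*} (s : Finset ι) {f g : ι → R}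
    (hg : ∀ k ∈ s, 0 ≤ g k) (hgf : ∀ k ∈ s, g k ≤ f k) (hf : ∀ k ∈ s, f k ≤ 1) :
    ∏ k ∈ s, f k - ∏ k ∈ s, g k ≤ ∑ k ∈ s, (f k - g k) := by
  classical
  induction s using Finset.induction_on with
  | empty => simp
  | insert a s ha ih =>
    simp only [mem_insert, forall_eq_or_imp] at hg hgf hf
    rw [prod_insert ha, prod_insert ha, sum_insert ha]
    have hprod : ∏ k ∈ s, g k ≤ ∏ k ∈ s, f k := prod_le_prod hg.2 hgf.2
    have hone : ∏ k ∈ s, f k ≤ 1 :=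
      prod_le_one (fun k hk ↦ (hg.2 k hk).trans (hgf.2 k hk)) hf.2
    exact (mul_sub_mul_le_sub_add_sub hgf.1 hf.1 hprod hone).trans
      (add_le_add_right (ih hg.2 hgf.2 hf.2) _)

end ProdSubProd

theorem prod_Ico_div_add_one {K : Type*} [Field K] [CharZero K] {i n : ℕ} (hi : 0 < i)
    (hin : i ≤ n) : ∏ j ∈ Ico i n, ((j : K) / ((j : K) + 1)) = i / n := by
  induction n, hin using Nat.le_induction with
  | base =>
    have : (i : K) ≠ 0 := Nat.cast_ne_zero.2 hi.ne'
    simp [this]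
  | succ n hn ih =>
    have : (n : K) ≠ 0 := Nat.cast_ne_zero.2 (hi.trans_le hn).ne'
    rw [prod_Ico_succ_top hn, ih]
    push_cast
    field_simp

theorem honest_player_bound_general (n : ℕ) (ε' : ℝ) (hε0 : 0 ≤ ε')
    (i : ℕ) (hi : 1 ≤ i) (hin : i ≤ n)
    (hfac : ∀ j ∈ Finset.Ico i n, 0 ≤ (j : ℝ) / ((j : ℝ) + 1) - ε') :
    (1 / (i : ℝ) - ε') * ∏ j ∈ Finset.Ico i n, ((j : ℝ) / ((j : ℝ) + 1) - ε')
      ≥ 1 / (n : ℝ) - (n : ℝ) * ε' := by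
  set P := ∏ j ∈ Ico i n, ((j : ℝ) / ((j : ℝ) + 1))
  set Q := ∏ j ∈ Ico i n, ((j : ℝ) / ((j : ℝ) + 1) - ε')
  have hfac_le_one : ∀ j ∈ Ico i n, (j : ℝ) / ((j : ℝ) + 1) ≤ 1 := fun j _ ↦
    div_le_one_of_le₀ (by linarith) (by positivity)
  have hQP : Q ≤ P := prod_le_prod hfac fun j _ ↦ by linarith
  have hP : P ≤ 1 := prod_le_one (fun j _ ↦ by positivity) hfac_le_one
  have hPQ : P - Q ≤ (n - i) * ε' := by
    have := prod_sub_prod_le_sum_sub (Ico i n) hfac (fun j _ ↦ by linarith) hfac_le_one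
    simpa only [sub_sub_cancel, sum_const, Nat.card_Ico, nsmul_eq_mul, Nat.cast_sub hin] using this
  have htelescope : 1 / (i : ℝ) * P = 1 / n := by
    have : (i : ℝ) ≠ 0 := by positivity
    have hP_eq : P = i / n := prod_Ico_div_add_one hi hin
    rw [hP_eq]
    field_simp
  have hi_one : 1 / (i : ℝ) ≤ 1 := div_le_one_of_le₀ (by exact_mod_cast hi) (by positivity)
  have hcount : ε' + (n - i) * ε' ≤ n * ε' := by
    have : (1 : ℝ) ≤ i := by exact_mod_cast hi
    nlinarith
  have hstep := mul_sub_mul_le_sub_add_sub (sub_le_self _ hε0) hi_one hQP hP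
  rw [htelescope, sub_sub_cancel] at hstep
  linarith

theorem honest_player_bound (n : ℕ) (hn : 2 ≤ n) (ε' : ℝ) (hε0 : 0 ≤ ε') (hε1 : ε' ≤ 1 / (n : ℝ))
    (i : ℕ) (hi : 1 ≤ i) (hin : i ≤ n)
    (hfac0 : 0 ≤ 1 / (i : ℝ) - ε')
    (hfac : ∀ j ∈ Finset.Ico i n, 0 ≤ (j : ℝ) / ((j : ℝ) + 1) - ε') :
    (1 / (i : ℝ) - ε') * ∏ j ∈ Finset.Ico i n, ((j : ℝ) / ((j : ℝ) + 1) - ε')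
      ≥ 1 / (n : ℝ) - (n : ℝ) * ε' :=
  honest_player_bound_general n ε' hε0 i hi hin hfac
end

section
/- For each n ≥ 2 and 1 ≤ i ≤ n, define c_{n,i} to be the multiset of honest probabilities player i faces in the recursive protocol: if n = 2^k and i arbitrary, it is k copies of 1/2; if 2^k < n < 2^(k+1) and i ≤ 2^k, it is k copies of 1/2 together with 2^k/n; if i > 2^k, it is the multiset for player i − 2^k in the protocol on n − 2^k players together with 1 − 2^k/n. Then the product of the elements of c_{n,i} equals 1/n. -/
theorem recursive_multiset_prod (c : ℕ → ℕ → Multiset ℝ)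
    (hpow : ∀ k i : ℕ, 1 ≤ i → i ≤ 2 ^ k → c (2 ^ k) i = Multiset.replicate k (1 / 2))
    (hlow : ∀ n k i : ℕ, 2 ^ k < n → n < 2 ^ (k + 1) → 1 ≤ i → i ≤ 2 ^ k →
      c n i = ((2 : ℝ) ^ k / (n : ℝ)) ::ₘ Multiset.replicate k (1 / 2))
    (hhigh : ∀ n k i : ℕ, 2 ^ k < n → n < 2 ^ (k + 1) → 2 ^ k < i → i ≤ n →
      c n i = (1 - (2 : ℝ) ^ k / (n : ℝ)) ::ₘ c (n - 2 ^ k) (i - 2 ^ k)) :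
    ∀ n i : ℕ, 2 ≤ n → 1 ≤ i → i ≤ n → (c n i).prod = 1 / (n : ℝ) := by
  suffices h : ∀ n i : ℕ, 1 ≤ n → 1 ≤ i → i ≤ n → (c n i).prod = 1 / (n : ℝ) by
    exact fun n i h2 => h n i (by omega)
  intro n
  induction n using Nat.strong_induction_on with
  | _ n ih =>
    intro i hn hi hin
    set k := Nat.log 2 n with hk
    have hkle : 2 ^ k ≤ n := Nat.pow_log_le_self 2 (by omega)
    have hklt : n < 2 ^ (k + 1) := Nat.lt_pow_succ_log_self (by norm_num) n
    have hnpos : (0 : ℝ) < n := by exact_mod_cast Nat.lt_of_lt_of_le Nat.zero_lt_one hn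
    rcases eq_or_lt_of_le hkle with heq | hlt
    · have hc := hpow k i hi (heq ▸ hin)
      rw [heq] at hc
      have hcast : ((2 : ℝ) ^ k) = (n : ℝ) := by exact_mod_cast congrArg Nat.cast heq
      rw [hc, Multiset.prod_replicate, one_div, inv_pow, hcast, one_div]
    · rcases le_or_gt i (2 ^ k) with hle | hgt
      · rw [hlow n k i hlt hklt hi hle, Multiset.prod_cons, Multiset.prod_replicate]
        rw [div_pow, one_pow]
        field_simp
      · have hsub : 1 ≤ n - 2 ^ k := by omega
        have hisub : 1 ≤ i - 2 ^ k := by omega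
        have hinsub : i - 2 ^ k ≤ n - 2 ^ k := by omega
        have hrec := ih (n - 2 ^ k) (by omega) (i - 2 ^ k) hsub hisub hinsub
        rw [hhigh n k i hlt hklt hgt hin, Multiset.prod_cons, hrec]
        have hcast : ((n - 2 ^ k : ℕ) : ℝ) = (n : ℝ) - 2 ^ k := by
          push_cast [Nat.cast_sub hkle]; ring
        rw [hcast]
        have h2 : (0 : ℝ) < (n : ℝ) - 2 ^ k := by
          have : (2 ^ k : ℝ) < n := by exact_mod_cast hlt
          linarith
        field_simp
end
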